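/- arXiv:1710.09999 — 3 statements merged into one kernel-verified Lean document; each statement's English description precedes it below -/
import Mathlib

section
/- In a braided multiplicity-free semi-simple tensor system over a commutative ring R, fix λ, ν ∈ I with ν acting one-dimensionally on λ, and the homogeneous tuple λ̃ = (λ,…,λ) of length L. Then for all admissible 1 ≤ i, i±1 ≤ L−1, as operators on H_{λ̃}: p_i^{(ν)} R_{i±1} p_i^{(ν)} = [Σ_{υ∈I} (F^{λλλ}_{φ_ν(λ)})^υ_ν R^{λλ}_υ (F̄^{λλλ}_{φ_ν(λ)})^ν_υ] p_i^{(ν)}, and p_i^{(ν)} R_{i±1}^{-1} p_i^{(ν)} = [Σ_{υ∈I} (F^{λλλ}_{φ_ν(λ)})^υ_ν R̄^{λλ}_υ (F̄^{λλλ}_{φ_ν(λ)})^ν_υ] p_i^{(ν)}, where R_j^{-1} denotes Σ_{μ∈I} R̄^{λλ}_μ p_j^{(μ)}. -/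
open scoped Classical

noncomputable section

/-- A multiplicity-free semi-simple tensor system over a commutative ring `R`,
with index set `I`, fusion constants `N`, and F-moves `F`, `Fbar`.
`F a b c d e f` denotes `(F^{abc}_d)^e_f` and `Fbar a b c d f e` denotes `(F̄^{abc}_d)^f_e`. -/
structure TensorSystem (R : Type*) [CommRing R] (I : Type*) where
  N : I → I → I → ℕ
  F : I → I → I → I → I → I → R
  Fbar : I → I → I → I → I → I → R
  N_le_one : ∀ a b c, N a b c ≤ 1
  N_assoc : ∀ a b c d, (∑ᶠ e, N a b e * N e c d) = ∑ᶠ e, N a e d * N b c e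
  N_finite : ∀ a b, (Function.support fun c => N a b c).Finite
  F_vanish : ∀ a b c d e f, N a b e * N b c f * N a f d * N e c d = 0 → F a b c d e f = 0
  Fbar_vanish : ∀ a b c d e f, N a b e * N b c f * N a f d * N e c d = 0 → Fbar a b c d f e = 0
  pentagon : ∀ a b c d e f g k l,
      (∑ᶠ h, F a b c g f h * F a h d e g k * F b c d k h l) = F f c d e g l * F a b l e f k
  F_Fbar : ∀ a b c d e e',
      (∑ᶠ f, F a b c d e f * Fbar a b c d f e')
        = (if e = e' then (1 : R) else 0) * (N a b e : R) * (N e c d : R)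
  Fbar_F : ∀ a b c d f f',
      (∑ᶠ e, Fbar a b c d f' e * F a b c d e f)
        = (if f = f' then (1 : R) else 0) * (N b c f : R) * (N a f d : R)

namespace TensorSystem

variable {R : Type*} [CommRing R] {I : Type*}

open Fin.NatCast

/-- `μ = (μ₀, μ₁, …, μ_L)` is a fusion path for the tuple `λ̃ = (lam 1, …, lam L)`:
`μ₀ ∈ I0` and `N_{μ_{i-1} λ_i}^{μ_i} = 1` for `1 ≤ i ≤ L`. -/
def IsPath (TS : TensorSystem R I) (L : ℕ) (I0 : Set I) (lam : ℕ → I)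
    (μ : Fin (L + 1) → I) : Prop :=
  μ 0 ∈ I0 ∧ ∀ i : ℕ, 1 ≤ i → i ≤ L →
    TS.N (μ ((i - 1 : ℕ) : Fin (L + 1))) (lam i) (μ ((i : ℕ) : Fin (L + 1))) = 1

/-- Matrix element `⟨μ'| p_i^{(ν)} |μ⟩` of the two-site projection operator. -/
def pMat (TS : TensorSystem R I) (L : ℕ) (lam : ℕ → I) (i : ℕ) (ν : I)
    (μ' μ : Fin (L + 1) → I) : R :=
  (∏ j ∈ Finset.univ.erase ((i : ℕ) : Fin (L + 1)), if μ j = μ' j then (1 : R) else 0)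
    * TS.Fbar (μ ((i - 1 : ℕ) : Fin (L + 1))) (lam i) (lam (i + 1))
        (μ ((i + 1 : ℕ) : Fin (L + 1))) ν (μ' ((i : ℕ) : Fin (L + 1)))
    * TS.F (μ ((i - 1 : ℕ) : Fin (L + 1))) (lam i) (lam (i + 1))
        (μ ((i + 1 : ℕ) : Fin (L + 1))) (μ ((i : ℕ) : Fin (L + 1))) ν

/-- Matrix elements of the composition of two operators on `H_{λ̃}`,
summing over the fusion-path basis. -/
def mulMat (TS : TensorSystem R I) (L : ℕ) (I0 : Set I) (lam : ℕ → I)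
    (A B : (Fin (L + 1) → I) → (Fin (L + 1) → I) → R)
    (μ' μ : Fin (L + 1) → I) : R :=
  ∑ᶠ μ'' ∈ {x : Fin (L + 1) → I | TS.IsPath L I0 lam x}, A μ' μ'' * B μ'' μ

/-- Two operators on `H_{λ̃}` are equal iff all their matrix elements between
fusion-path basis vectors agree. -/
def MatEqOn (TS : TensorSystem R I) (L : ℕ) (I0 : Set I) (lam : ℕ → I)
    (A B : (Fin (L + 1) → I) → (Fin (L + 1) → I) → R) : Prop :=
  ∀ μ' μ : Fin (L + 1) → I, TS.IsPath L I0 lam μ' → TS.IsPath L I0 lam μ → A μ' μ = B μ' μ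

/-- Extended fusion numbers `N_{a a₁ ⋯ aₙ}^b` along a list `[a₁, …, aₙ]`. -/
def Nseq (TS : TensorSystem R I) : I → List I → I → ℕ
  | a, [], b => if a = b then 1 else 0
  | a, c :: rest, b => ∑ᶠ x, TS.N a c x * Nseq TS x rest b

/-- `ν` acts one-dimensionally on the left of `μ`. -/
def ActsOneDimLeft (TS : TensorSystem R I) (ν μ : I) : Prop :=
  (∑ᶠ μ' : I, TS.N ν μ μ') = 1

/-- `ν` acts one-dimensionally on the right of `μ`. -/
def ActsOneDimRight (TS : TensorSystem R I) (ν μ : I) : Prop :=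
  (∑ᶠ μ' : I, TS.N μ ν μ') = 1

end TensorSystem

/-- Matrix elements of the identity operator. -/
def deltaMat {R : Type*} [CommRing R] {I : Type*} (L : ℕ)
    (μ' μ : Fin (L + 1) → I) : R :=
  ∏ j : Fin (L + 1), if μ j = μ' j then (1 : R) else 0

/-- Scalar multiple of a matrix of operator matrix elements. -/
def smulMat {R : Type*} [CommRing R] {α : Sort*} (c : R) (A : α → α → R) : α → α → R :=
  fun x y => c * A x y

/-- A braided multiplicity-free semi-simple tensor system: additionally `N` is
symmetric and there are braiding constants `Rm a b c = R^{ab}_c`,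
`Rbarm a b c = R̄^{ab}_c` satisfying the hexagon relations. -/
structure BraidedTensorSystem (R : Type*) [CommRing R] (I : Type*) extends TensorSystem R I where
  N_symm : ∀ a b c, N a b c = N b a c
  Rm : I → I → I → R
  Rbarm : I → I → I → R
  Rm_vanish : ∀ a b c, N a b c = 0 → Rm a b c = 0
  Rbarm_vanish : ∀ a b c, N a b c = 0 → Rbarm a b c = 0
  hexagonR : ∀ a b c d e g,
      Rm a c e * F a c b d e g * Rm b c g
        = ∑ᶠ f, F c a b d e f * Rm f c d * F a b c d f g
  hexagonRbar : ∀ a b c d e g,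
      Rbarm a c e * F a c b d e g * Rbarm b c g
        = ∑ᶠ f, F c a b d e f * Rbarm f c d * F a b c d f g
  Rm_Rbarm : ∀ a b c, Rm a b c * Rbarm b a c = (N a b c : R)

namespace BraidedTensorSystem

variable {R : Type*} [CommRing R] {I : Type*}

/-- Matrix elements of the braiding operator `R_i = Σ_m R^{λλ}_m p_i^{(m)}`
on a homogeneous chain `λ̃ = (lam0, …, lam0)`. -/
def Rmat (BTS : BraidedTensorSystem R I) (L : ℕ) (lam0 : I) (i : ℕ)
    (μ' μ : Fin (L + 1) → I) : R :=
  ∑ᶠ m : I, BTS.Rm lam0 lam0 m * BTS.toTensorSystem.pMat L (fun _ => lam0) i m μ' μ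

/-- Matrix elements of the inverse braiding operator
`R_i⁻¹ = Σ_m R̄^{λλ}_m p_i^{(m)}`. -/
def RbarMat (BTS : BraidedTensorSystem R I) (L : ℕ) (lam0 : I) (i : ℕ)
    (μ' μ : Fin (L + 1) → I) : R :=
  ∑ᶠ m : I, BTS.Rbarm lam0 lam0 m * BTS.toTensorSystem.pMat L (fun _ => lam0) i m μ' μ

end BraidedTensorSystem

/-!
Sandwiched between two copies of `p_i^{(ν)}`, the neighbouring braiding `R_{i±1}` only sees the
three sites around `i`, so a matrix element of `p_i^{(ν)} R_{i±1} p_i^{(ν)}` is a single sum of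
four F-symbols weighted by `R^{λλ}_m`. Inserting the resolution of the identity of one more F-move
and applying the pentagon equation (for `F` and for `F̄`) to each half, this sum factorises through
the fusion channels `k` of `ν ⊗ λ`; as `ν` acts one-dimensionally only `k = φ_ν(λ)` survives,
leaving a scalar multiple of `p_i^{(ν)}`. For `R_{i+1}` the scalar comes out as
`Σ_υ (F)^ν_υ R^{λλ}_υ (F̄)^υ_ν`, which the hexagon identifies with the stated one.
-/

lemma Finset.sum_sum_ite_and_eq {ι κ M : Type*} [AddCommMonoid M] {s : Finset ι}
    {t : ι → Finset κ} {x₀ : ι} {y₀ : κ} (hx : x₀ ∈ s) (hy : y₀ ∈ t x₀)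
    (G : ι → κ → M) :
    ∑ x ∈ s, ∑ y ∈ t x, (if x = x₀ ∧ y = y₀ then G x y else 0) = G x₀ y₀ := by
  rw [Finset.sum_eq_single_of_mem x₀ hx fun x _ hx => Finset.sum_eq_zero fun y _ => by simp [hx],
    Finset.sum_eq_single_of_mem y₀ hy fun y _ hy => by simp [hy]]
  simp

lemma Finset.sum_sum_sum_sigma_comm {α β γ δ M : Type*} [AddCommMonoid M] (s : Finset α)
    (t : Finset β) (u : Finset γ) (v : γ → Finset δ) (f : α → β → γ → δ → M) :
    ∑ a ∈ s, ∑ b ∈ t, ∑ c ∈ u, ∑ d ∈ v c, f a b c d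
      = ∑ c ∈ u, ∑ d ∈ v c, ∑ a ∈ s, ∑ b ∈ t, f a b c d := by
  rw [Finset.sum_sigma' u v]
  simp_rw [Finset.sum_sigma' u v (fun c d => f _ _ c d)]
  calc _ = ∑ a ∈ s, ∑ p ∈ u.sigma v, ∑ b ∈ t, f a b p.1 p.2 :=
        Finset.sum_congr rfl fun _ _ => Finset.sum_comm
    _ = _ := Finset.sum_comm

namespace TensorSystem

variable {R : Type*} [CommRing R] {I : Type*} (TS : TensorSystem R I)

def channels (a b : I) : Finset I := (TS.N_finite a b).toFinset

@[simp]
lemma mem_channels {a b x : I} : x ∈ TS.channels a b ↔ TS.N a b x ≠ 0 := by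
  simp [channels]

lemma N_eq_zero_of_notMem_channels {a b x : I} (h : x ∉ TS.channels a b) : TS.N a b x = 0 := by
  simpa using h

lemma N_eq_one_of_ne_zero {a b c : I} (h : TS.N a b c ≠ 0) : TS.N a b c = 1 := by
  have := TS.N_le_one a b c; omega

lemma N_cast_mul_self (a b c : I) : (TS.N a b c : R) * TS.N a b c = TS.N a b c := by
  rcases Nat.le_one_iff_eq_zero_or_eq_one.1 (TS.N_le_one a b c) with h | h <;> simp [h]

lemma finsum_eq_sum_of_N {M : Type*} [AddCommMonoid M] {a b : I} {s : Finset I}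
    (hs : TS.channels a b ⊆ s) {f : I → M} (hf : ∀ x, TS.N a b x = 0 → f x = 0) :
    ∑ᶠ x, f x = ∑ x ∈ s, f x :=
  finsum_eq_sum_of_support_subset f fun x hx => hs (TS.mem_channels.2 fun h => hx (hf x h))

/- The subscripts `₁ … ₄` refer to the four fusion constants `N_{ab}^e, N_{bc}^f, N_{af}^d,
N_{ec}^d` of (F.1) attached to `(F^{abc}_d)^e_f` and `(F̄^{abc}_d)^f_e`. -/

lemma F_eq_zero₁ {a b e : I} (c d f : I) (h : TS.N a b e = 0) : TS.F a b c d e f = 0 :=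
  TS.F_vanish a b c d e f (by simp [h])
lemma F_eq_zero₂ {b c f : I} (a d e : I) (h : TS.N b c f = 0) : TS.F a b c d e f = 0 :=
  TS.F_vanish a b c d e f (by simp [h])
lemma F_eq_zero₃ {a f d : I} (b c e : I) (h : TS.N a f d = 0) : TS.F a b c d e f = 0 :=
  TS.F_vanish a b c d e f (by simp [h])
lemma F_eq_zero₄ {e c d : I} (a b f : I) (h : TS.N e c d = 0) : TS.F a b c d e f = 0 :=
  TS.F_vanish a b c d e f (by simp [h])

lemma Fbar_eq_zero₁ {a b e : I} (c d f : I) (h : TS.N a b e = 0) : TS.Fbar a b c d f e = 0 :=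
  TS.Fbar_vanish a b c d e f (by simp [h])
lemma Fbar_eq_zero₂ {b c f : I} (a d e : I) (h : TS.N b c f = 0) : TS.Fbar a b c d f e = 0 :=
  TS.Fbar_vanish a b c d e f (by simp [h])
lemma Fbar_eq_zero₃ {a f d : I} (b c e : I) (h : TS.N a f d = 0) : TS.Fbar a b c d f e = 0 :=
  TS.Fbar_vanish a b c d e f (by simp [h])
lemma Fbar_eq_zero₄ {e c d : I} (a b f : I) (h : TS.N e c d = 0) : TS.Fbar a b c d f e = 0 :=
  TS.Fbar_vanish a b c d e f (by simp [h])

lemma mul_N_eq_self {x : R} {a b c : I} (h : TS.N a b c = 0 → x = 0) :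
    x * (TS.N a b c : R) = x := by
  rcases Nat.le_one_iff_eq_zero_or_eq_one.1 (TS.N_le_one a b c) with hN | hN <;> simp [hN, h]

lemma F_mul_N₁ (a b c d e f : I) : TS.F a b c d e f * (TS.N a b e : R) = TS.F a b c d e f :=
  TS.mul_N_eq_self (TS.F_eq_zero₁ c d f)
lemma F_mul_N₂ (a b c d e f : I) : TS.F a b c d e f * (TS.N b c f : R) = TS.F a b c d e f :=
  TS.mul_N_eq_self (TS.F_eq_zero₂ a d e)
lemma F_mul_N₃ (a b c d e f : I) : TS.F a b c d e f * (TS.N a f d : R) = TS.F a b c d e f :=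
  TS.mul_N_eq_self (TS.F_eq_zero₃ b c e)
lemma F_mul_N₄ (a b c d e f : I) : TS.F a b c d e f * (TS.N e c d : R) = TS.F a b c d e f :=
  TS.mul_N_eq_self (TS.F_eq_zero₄ a b f)

lemma Fbar_mul_N₁ (a b c d e f : I) :
    TS.Fbar a b c d f e * (TS.N a b e : R) = TS.Fbar a b c d f e :=
  TS.mul_N_eq_self (TS.Fbar_eq_zero₁ c d f)
lemma Fbar_mul_N₂ (a b c d e f : I) :
    TS.Fbar a b c d f e * (TS.N b c f : R) = TS.Fbar a b c d f e :=
  TS.mul_N_eq_self (TS.Fbar_eq_zero₂ a d e)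
lemma Fbar_mul_N₃ (a b c d e f : I) :
    TS.Fbar a b c d f e * (TS.N a f d : R) = TS.Fbar a b c d f e :=
  TS.mul_N_eq_self (TS.Fbar_eq_zero₃ b c e)
lemma Fbar_mul_N₄ (a b c d e f : I) :
    TS.Fbar a b c d f e * (TS.N e c d : R) = TS.Fbar a b c d f e :=
  TS.mul_N_eq_self (TS.Fbar_eq_zero₄ a b f)

lemma sum_F_mul_Fbar {b c : I} {s : Finset I} (hs : TS.channels b c ⊆ s)
    (a d e e' : I) :
    ∑ x ∈ s, TS.F a b c d e x * TS.Fbar a b c d x e'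
      = if e = e' then (TS.N a b e : R) * TS.N e c d else 0 := by
  rw [← TS.finsum_eq_sum_of_N hs fun x hx => by rw [TS.F_eq_zero₂ a d e hx, zero_mul],
    TS.F_Fbar]
  split_ifs <;> ring

lemma sum_Fbar_mul_F {a b : I} {s : Finset I} (hs : TS.channels a b ⊆ s)
    (c d f f' : I) :
    ∑ x ∈ s, TS.Fbar a b c d f' x * TS.F a b c d x f
      = if f = f' then (TS.N b c f : R) * TS.N a f d else 0 := by
  rw [← TS.finsum_eq_sum_of_N hs fun x hx => by rw [TS.Fbar_eq_zero₁ c d f' hx, zero_mul],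
    TS.Fbar_F]
  split_ifs <;> ring

lemma sum_pentagon {b c : I} {s : Finset I} (hs : TS.channels b c ⊆ s)
    (a d e f g k l : I) :
    ∑ h ∈ s, TS.F a b c g f h * TS.F a h d e g k * TS.F b c d k h l
      = TS.F f c d e g l * TS.F a b l e f k := by
  rw [← TS.finsum_eq_sum_of_N hs fun x hx => by rw [TS.F_eq_zero₂ a g f hx, zero_mul, zero_mul],
    TS.pentagon]

lemma sum_sum_F_F_mul_Fbar_Fbar (a b c d e k l k' l' : I) :
    ∑ f ∈ TS.channels a b, ∑ g ∈ TS.channels f c,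
        (TS.F f c d e g l' * TS.F a b l' e f k') * (TS.Fbar a b l e k f * TS.Fbar f c d e l g)
      = if l' = l ∧ k' = k then (TS.N c d l : R) * TS.N b l k * TS.N a k e else 0 := by
  calc _ = ∑ f ∈ TS.channels a b, TS.F a b l' e f k' * TS.Fbar a b l e k f
          * ∑ g ∈ TS.channels f c, TS.Fbar f c d e l g * TS.F f c d e g l' := by
        simp_rw [Finset.mul_sum]
        exact Finset.sum_congr rfl fun _ _ => Finset.sum_congr rfl fun _ _ => by ring
    _ = _ := by
        simp_rw [TS.sum_Fbar_mul_F subset_rfl]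
        by_cases hl : l' = l
        · subst hl
          have absorb : ∀ f, TS.F a b l' e f k' * TS.Fbar a b l' e k f
              * (if l' = l' then (TS.N c d l' : R) * TS.N f l' e else 0)
              = TS.N c d l' * (TS.Fbar a b l' e k f * TS.F a b l' e f k') := fun f => by
            rw [if_pos rfl]
            linear_combination
              (TS.N c d l' : R) * TS.F a b l' e f k' * TS.Fbar_mul_N₄ a b l' e f k
          rw [Finset.sum_congr rfl fun f _ => absorb f, ← Finset.mul_sum,
            TS.sum_Fbar_mul_F subset_rfl]
          by_cases hk : k' = k <;> simp [hk]; ring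
        · simp [hl]

lemma sum_sum_Fbar3_mul_F3 {a b c d e : I} {K : Finset I}
    (hK : ∀ h ∈ TS.channels b c, TS.channels h d ⊆ K) (f g f' g' : I) :
    ∑ l ∈ TS.channels c d, ∑ k ∈ K,
        (∑ h ∈ TS.channels b c, TS.Fbar b c d k l h * TS.Fbar a h d e k g * TS.Fbar a b c g h f)
          * ∑ h ∈ TS.channels b c, TS.F a b c g' f' h * TS.F a h d e g' k * TS.F b c d k h l
      = if f' = f ∧ g' = g then (TS.N a b f : R) * TS.N f c g * TS.N g d e else 0 := by
  calc _ = ∑ k ∈ K, ∑ h' ∈ TS.channels b c, ∑ h ∈ TS.channels b c,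
          (TS.Fbar a h' d e k g * TS.Fbar a b c g h' f * TS.F a b c g' f' h * TS.F a h d e g' k)
            * ∑ l ∈ TS.channels c d, TS.F b c d k h l * TS.Fbar b c d k l h' := by
        rw [Finset.sum_comm]
        refine Finset.sum_congr rfl fun k _ => ?_
        simp_rw [Finset.sum_mul_sum, Finset.mul_sum]
        rw [Finset.sum_comm]
        refine Finset.sum_congr rfl fun h' _ => ?_
        rw [Finset.sum_comm]
        exact Finset.sum_congr rfl fun h _ => Finset.sum_congr rfl fun l _ => by ring
    _ = ∑ h' ∈ TS.channels b c,
          (TS.F a b c g' f' h' * TS.Fbar a b c g h' f)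
            * ∑ k ∈ K, TS.F a h' d e g' k * TS.Fbar a h' d e k g := by
        rw [Finset.sum_comm]
        refine Finset.sum_congr rfl fun h' hh' => ?_
        rw [Finset.mul_sum]
        refine Finset.sum_congr rfl fun k _ => ?_
        simp_rw [TS.sum_F_mul_Fbar subset_rfl, mul_ite, mul_zero, Finset.sum_ite_eq',
          if_pos hh']
        linear_combination
          (TS.Fbar a b c g h' f * TS.F a h' d e g' k * (TS.N b c h' : R) * TS.F a b c g' f' h')
              * TS.Fbar_mul_N₂ a h' d e g k
            + (TS.Fbar a h' d e k g * TS.Fbar a b c g h' f * TS.F a h' d e g' k)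
              * TS.F_mul_N₂ a b c g' f' h'
    _ = _ := by
        rw [Finset.sum_congr rfl fun h' hh' => by rw [TS.sum_F_mul_Fbar (hK h' hh') a e g' g]]
        by_cases hg : g' = g
        · subst hg
          have absorb : ∀ h', TS.F a b c g' f' h' * TS.Fbar a b c g' h' f
              * ((TS.N a h' g' : R) * TS.N g' d e)
              = TS.F a b c g' f' h' * TS.Fbar a b c g' h' f * TS.N g' d e := fun h' => by
            linear_combination
              TS.F a b c g' f' h' * (TS.N g' d e : R) * TS.Fbar_mul_N₃ a b c g' f h'
          simp_rw [if_true, absorb, ← Finset.sum_mul, TS.sum_F_mul_Fbar subset_rfl]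
          by_cases hf : f' = f <;> simp [hf]
        · simp [hg]

lemma pentagon_bar (a b c d e f g k l : I) :
    ∑ h ∈ TS.channels b c, TS.Fbar b c d k l h * TS.Fbar a h d e k g * TS.Fbar a b c g h f
      = TS.Fbar a b l e k f * TS.Fbar f c d e l g := by
  by_cases hl : TS.N c d l = 0
  · rw [TS.Fbar_eq_zero₂ f e g hl, mul_zero]
    exact Finset.sum_eq_zero fun h _ => by rw [TS.Fbar_eq_zero₂ b k h hl, zero_mul, zero_mul]
  by_cases hk : TS.N b l k = 0
  · rw [TS.Fbar_eq_zero₂ a e f hk, zero_mul]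
    exact Finset.sum_eq_zero fun h _ => by rw [TS.Fbar_eq_zero₃ c d h hk, zero_mul, zero_mul]
  by_cases he : TS.N a k e = 0
  · rw [TS.Fbar_eq_zero₃ b l f he, zero_mul]
    exact Finset.sum_eq_zero fun h _ => by rw [TS.Fbar_eq_zero₃ h d g he, mul_zero, zero_mul]
  by_cases hf : TS.N a b f = 0
  · rw [TS.Fbar_eq_zero₁ l e k hf, zero_mul]
    exact Finset.sum_eq_zero fun h _ => by rw [TS.Fbar_eq_zero₁ c g h hf, mul_zero]
  by_cases hg : TS.N f c g = 0
  · rw [TS.Fbar_eq_zero₁ d e l hg, mul_zero]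
    exact Finset.sum_eq_zero fun h _ => by rw [TS.Fbar_eq_zero₄ a b h hg, mul_zero]
  set Q : I → I → R := fun l k => ∑ h ∈ TS.channels b c,
    TS.Fbar b c d k l h * TS.Fbar a h d e k g * TS.Fbar a b c g h f
  set K :=
    (TS.channels c d).biUnion (TS.channels b ·) ∪ (TS.channels b c).biUnion (TS.channels · d)
  have hK : ∀ h ∈ TS.channels b c, TS.channels h d ⊆ K := fun h hh =>
    (Finset.subset_biUnion_of_mem (TS.channels · d) hh).trans Finset.subset_union_right
  have hkK : k ∈ K := Finset.mem_union_left _ (Finset.mem_biUnion.2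
    ⟨l, TS.mem_channels.2 hl, TS.mem_channels.2 hk⟩)
  -- `Q` is a left inverse of the three-move composite, the product of the two inverse moves
  -- is a right inverse of the two-move composite, and the pentagon identifies the composites.
  calc Q l k
      = ∑ l' ∈ TS.channels c d, ∑ k' ∈ K, Q l' k' * ∑ f' ∈ TS.channels a b,
          ∑ g' ∈ TS.channels f' c, (TS.F f' c d e g' l' * TS.F a b l' e f' k')
            * (TS.Fbar a b l e k f' * TS.Fbar f' c d e l g') := by
        simp_rw [TS.sum_sum_F_F_mul_Fbar_Fbar, mul_ite, mul_zero,
          Finset.sum_sum_ite_and_eq (t := fun _ => K) (TS.mem_channels.2 hl) hkK,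
          TS.N_eq_one_of_ne_zero hl, TS.N_eq_one_of_ne_zero hk, TS.N_eq_one_of_ne_zero he]
        simp
    _ = ∑ f' ∈ TS.channels a b, ∑ g' ∈ TS.channels f' c,
          (∑ l' ∈ TS.channels c d, ∑ k' ∈ K,
            Q l' k' * (TS.F f' c d e g' l' * TS.F a b l' e f' k'))
          * (TS.Fbar a b l e k f' * TS.Fbar f' c d e l g') := by
        simp_rw [Finset.mul_sum, Finset.sum_mul, mul_assoc]
        exact Finset.sum_sum_sum_sigma_comm _ _ _ _ _
    _ = TS.Fbar a b l e k f * TS.Fbar f c d e l g := by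
        simp_rw [← TS.sum_pentagon subset_rfl, Q, TS.sum_sum_Fbar3_mul_F3 hK, ite_mul, zero_mul,
          Finset.sum_sum_ite_and_eq (t := (TS.channels · c)) (TS.mem_channels.2 hf)
            (TS.mem_channels.2 hg),
          TS.N_eq_one_of_ne_zero hf, TS.N_eq_one_of_ne_zero hg, Nat.cast_one, one_mul]
        linear_combination TS.Fbar a b l e k f * TS.Fbar_mul_N₄ f c d e g l

lemma sum_Fbar_mul_F_mul_F {s : Finset I} {a b : I} (hs : TS.channels a b ⊆ s)
    (c d e g k l ν : I) :
    ∑ f ∈ s, TS.Fbar a b c g ν f * TS.F f c d e g l * TS.F a b l e f k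
      = (TS.N b c ν : R) * TS.N a ν g * (TS.F a ν d e g k * TS.F b c d k ν l) := by
  simp_rw [mul_assoc, ← TS.sum_pentagon subset_rfl, Finset.mul_sum]
  rw [Finset.sum_comm]
  simp_rw [← mul_assoc, ← Finset.sum_mul, TS.sum_Fbar_mul_F hs, ite_mul, zero_mul,
    Finset.sum_ite_eq']
  split_ifs with hmem
  · ring
  · rw [TS.N_eq_zero_of_notMem_channels hmem]; ring

lemma sum_F_mul_Fbar_mul_Fbar {s : Finset I} {a b : I} (hs : TS.channels a b ⊆ s)
    (c d e g k l ν : I) :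
    ∑ f ∈ s, TS.F a b c g f ν * TS.Fbar a b l e k f * TS.Fbar f c d e l g
      = (TS.N b c ν : R) * TS.N a ν g * (TS.Fbar b c d k l ν * TS.Fbar a ν d e k g) := by
  simp_rw [mul_assoc, ← TS.pentagon_bar, Finset.mul_sum]
  rw [Finset.sum_comm]
  simp_rw [mul_comm (TS.F _ _ _ _ _ _), mul_assoc, ← Finset.mul_sum, TS.sum_Fbar_mul_F hs,
    mul_ite, mul_zero, Finset.sum_ite_eq]
  split_ifs with hmem
  · ring
  · rw [TS.N_eq_zero_of_notMem_channels hmem]; ring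

lemma F_mul_F_eq_sum (a b c d e f g h k : I) :
    TS.F a b c g f h * TS.F a h d e g k
      = ∑ l ∈ TS.channels c d, TS.F f c d e g l * TS.F a b l e f k * TS.Fbar b c d k l h := by
  simp_rw [← TS.sum_pentagon subset_rfl, Finset.sum_mul]
  rw [Finset.sum_comm]
  simp_rw [mul_assoc, ← Finset.mul_sum, TS.sum_F_mul_Fbar subset_rfl, mul_ite, mul_zero,
    Finset.sum_ite_eq']
  split_ifs with hmem
  · linear_combination (-(TS.F a h d e g k * (TS.N h d k : R))) * TS.F_mul_N₂ a b c g f h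
      - TS.F a b c g f h * TS.F_mul_N₂ a h d e g k
  · rw [TS.F_eq_zero₂ a g f (TS.N_eq_zero_of_notMem_channels hmem), zero_mul]

lemma Fbar_mul_Fbar_eq_sum (a b c d e f g h k : I) :
    TS.Fbar a h d e k g * TS.Fbar a b c g h f
      = ∑ l ∈ TS.channels c d,
          TS.F b c d k h l * TS.Fbar a b l e k f * TS.Fbar f c d e l g := by
  simp_rw [mul_assoc, ← TS.pentagon_bar, Finset.mul_sum]
  rw [Finset.sum_comm]
  simp_rw [← mul_assoc, ← Finset.sum_mul, TS.sum_F_mul_Fbar subset_rfl, ite_mul, zero_mul,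
    Finset.sum_ite_eq]
  split_ifs with hmem
  · linear_combination (-(TS.Fbar a h d e k g * (TS.N h d k : R))) * TS.Fbar_mul_N₂ a b c g f h
      - TS.Fbar a b c g h f * TS.Fbar_mul_N₂ a h d e g k
  · rw [TS.Fbar_eq_zero₂ a g f (TS.N_eq_zero_of_notMem_channels hmem), mul_zero]

lemma sum_Fbar_mul_F_mul_F' {s : Finset I} {f c : I} (hs : TS.channels f c ⊆ s)
    (a b d e h k ν : I) :
    ∑ g ∈ s, TS.Fbar f c d e ν g * TS.F a b c g f h * TS.F a h d e g k
      = (TS.N c d ν : R) * TS.N f ν e * (TS.F a b ν e f k * TS.Fbar b c d k ν h) := by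
  simp_rw [mul_assoc, TS.F_mul_F_eq_sum, Finset.mul_sum]
  rw [Finset.sum_comm]
  simp_rw [← mul_assoc, ← Finset.sum_mul, TS.sum_Fbar_mul_F hs, ite_mul, zero_mul,
    Finset.sum_ite_eq']
  split_ifs with hmem
  · ring
  · rw [TS.N_eq_zero_of_notMem_channels hmem]; ring

lemma sum_F_mul_Fbar_mul_Fbar' {s : Finset I} {f c : I} (hs : TS.channels f c ⊆ s)
    (a b d e h k ν : I) :
    ∑ g ∈ s, TS.F f c d e g ν * TS.Fbar a h d e k g * TS.Fbar a b c g h f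
      = (TS.N c d ν : R) * TS.N f ν e * (TS.F b c d k h ν * TS.Fbar a b ν e k f) := by
  simp_rw [mul_assoc, TS.Fbar_mul_Fbar_eq_sum, Finset.mul_sum]
  rw [Finset.sum_comm]
  simp_rw [mul_comm (TS.F f c d e _ ν), mul_assoc, ← Finset.mul_sum, TS.sum_Fbar_mul_F hs,
    mul_ite, mul_zero, Finset.sum_ite_eq]
  split_ifs with hmem
  · ring
  · rw [TS.N_eq_zero_of_notMem_channels hmem]; ring

lemma N_eq_zero_of_actsOneDimLeft {ν lam φ : I} (hone : TS.ActsOneDimLeft ν lam)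
    (hφ : TS.N ν lam φ = 1) {x : I} (hx : x ≠ φ) : TS.N ν lam x = 0 := by
  by_contra h
  have hle := Finset.sum_le_sum_of_subset (f := TS.N ν lam)
    (show {x, φ} ⊆ TS.channels ν lam by
      simp only [Finset.insert_subset_iff, Finset.singleton_subset_iff, mem_channels, hφ]
      exact ⟨h, one_ne_zero⟩)
  rw [Finset.sum_pair hx, hφ, ← TS.finsum_eq_sum_of_N subset_rfl fun _ h => h] at hle
  unfold ActsOneDimLeft at hone
  omega

lemma F_mul_Fbar_of_unique_channel {b c φ : I} (hφ : ∀ k, k ≠ φ → TS.N b c k = 0)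
    (a d e e' : I) :
    TS.F a b c d e φ * TS.Fbar a b c d φ e'
      = if e = e' then (TS.N a b e : R) * TS.N e c d else 0 := by
  rw [← TS.sum_F_mul_Fbar (s := {φ}) fun x hx => Finset.mem_singleton.2
    (by_contra fun h => TS.mem_channels.1 hx (hφ x h))]
  simp

lemma sum_sum_mul_F_mul_sum_mul_Fbar {s t : Finset I} {b c : I} (ht : TS.channels b c ⊆ t)
    (a d : I) (u v : I → R) :
    ∑ k ∈ t, (∑ x ∈ s, u x * TS.F a b c d x k) * (∑ x ∈ s, v x * TS.Fbar a b c d k x)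
      = ∑ x ∈ s, u x * v x * ((TS.N a b x : R) * TS.N x c d) := by
  simp_rw [Finset.sum_mul_sum]
  rw [Finset.sum_comm]
  refine Finset.sum_congr rfl fun x hx => ?_
  rw [Finset.sum_comm]
  simp_rw [show ∀ k x', u x * TS.F a b c d x k * (v x' * TS.Fbar a b c d k x')
      = u x * v x' * (TS.F a b c d x k * TS.Fbar a b c d k x') from fun _ _ => by ring,
    ← Finset.mul_sum, TS.sum_F_mul_Fbar ht, mul_ite, mul_zero, Finset.sum_ite_eq, if_pos hx]

lemma sandwich_coeff_succ {lam ν φ : I} (hφ : ∀ k, k ≠ φ → TS.N ν lam k = 0)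
    (a c c' d m : I) :
    ∑ x ∈ TS.channels a lam, TS.F a lam lam c' x ν * TS.Fbar x lam lam d m c'
        * TS.F x lam lam d c m * TS.Fbar a lam lam c ν x
      = TS.F lam lam lam φ ν m * TS.Fbar lam lam lam φ m ν
          * if c = c' then (TS.N a ν c : R) * TS.N c lam d else 0 := by
  -- Split the sum through the resolution of the identity of `F^{aλm}_d`: each half is a
  -- contracted pentagon, and of the channels `k` of `ν ⊗ λ` only `φ` survives.
  have resolve := TS.sum_sum_mul_F_mul_sum_mul_Fbar (s := TS.channels a lam)
    (b := lam) (c := m) subset_rfl a d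
    (fun x => TS.Fbar a lam lam c ν x * TS.F x lam lam d c m)
    (fun x => TS.F a lam lam c' x ν * TS.Fbar x lam lam d m c')
  simp_rw [TS.sum_Fbar_mul_F_mul_F subset_rfl,
    show ∀ k x, TS.F a lam lam c' x ν * TS.Fbar x lam lam d m c' * TS.Fbar a lam m d k x
      = TS.F a lam lam c' x ν * TS.Fbar a lam m d k x * TS.Fbar x lam lam d m c'
      from fun _ _ => by ring, TS.sum_F_mul_Fbar_mul_Fbar subset_rfl] at resolve
  calc _ = ∑ x ∈ TS.channels a lam, TS.Fbar a lam lam c ν x * TS.F x lam lam d c m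
          * (TS.F a lam lam c' x ν * TS.Fbar x lam lam d m c')
          * ((TS.N a lam x : R) * TS.N x m d) :=
        Finset.sum_congr rfl fun x _ => by
          linear_combination (-(TS.F x lam lam d c m * TS.F a lam lam c' x ν
              * TS.Fbar x lam lam d m c' * (TS.N x m d : R))) * TS.Fbar_mul_N₁ a lam lam c x ν
            - TS.Fbar a lam lam c ν x * TS.F a lam lam c' x ν * TS.Fbar x lam lam d m c'
              * TS.F_mul_N₃ x lam lam d c m
    _ = TS.F lam lam lam φ ν m * TS.Fbar lam lam lam φ m ν
          * ((TS.N lam lam ν : R) * TS.N lam lam ν) * ((TS.N a ν c : R) * TS.N a ν c')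
          * (TS.F a ν lam d c φ * TS.Fbar a ν lam d φ c') := by
        rw [← resolve, Finset.sum_eq_single φ
          (fun k _ hk => by rw [TS.F_eq_zero₂ a d c (hφ k hk)]; ring)
          fun hφm => by
            rw [TS.F_eq_zero₃ lam lam ν (TS.N_eq_zero_of_notMem_channels hφm)]; ring]
        ring
    _ = _ := by
        rw [TS.F_mul_Fbar_of_unique_channel hφ, TS.N_cast_mul_self]
        split_ifs with hc
        · subst hc
          linear_combination (TS.Fbar lam lam lam φ m ν * (TS.N a ν c : R) * TS.N a ν c
              * TS.N a ν c * TS.N c lam d) * TS.F_mul_N₁ lam lam lam φ ν m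
            + (TS.F lam lam lam φ ν m * TS.Fbar lam lam lam φ m ν * TS.N c lam d
              * ((TS.N a ν c : R) + 1)) * TS.N_cast_mul_self a ν c
        · ring

lemma sandwich_coeff_pred {lam ν φ : I} (hφ : ∀ k, k ≠ φ → TS.N lam ν k = 0)
    {s : Finset I} {b b' : I} (hs : TS.channels b lam ⊆ s) (hs' : TS.channels b' lam ⊆ s)
    (a d m : I) :
    ∑ y ∈ s, TS.F b' lam lam d y ν * TS.Fbar a lam lam y m b'
        * TS.F a lam lam y b m * TS.Fbar b lam lam d ν y
      = TS.F lam lam lam φ m ν * TS.Fbar lam lam lam φ ν m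
          * if b = b' then (TS.N a lam b : R) * TS.N b ν d else 0 := by
  have resolve := TS.sum_sum_mul_F_mul_sum_mul_Fbar (s := s) (b := m) (c := lam) subset_rfl a d
    (fun y => TS.Fbar b lam lam d ν y * TS.F a lam lam y b m)
    (fun y => TS.F b' lam lam d y ν * TS.Fbar a lam lam y m b')
  simp_rw [TS.sum_Fbar_mul_F_mul_F' hs,
    show ∀ k y, TS.F b' lam lam d y ν * TS.Fbar a lam lam y m b' * TS.Fbar a m lam d k y
      = TS.F b' lam lam d y ν * TS.Fbar a m lam d k y * TS.Fbar a lam lam y m b'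
      from fun _ _ => by ring, TS.sum_F_mul_Fbar_mul_Fbar' hs'] at resolve
  calc _ = ∑ y ∈ s, TS.Fbar b lam lam d ν y * TS.F a lam lam y b m
          * (TS.F b' lam lam d y ν * TS.Fbar a lam lam y m b')
          * ((TS.N a m y : R) * TS.N y lam d) :=
        Finset.sum_congr rfl fun y _ => by
          linear_combination (-(TS.Fbar b lam lam d ν y * TS.F b' lam lam d y ν
              * TS.Fbar a lam lam y m b' * (TS.N y lam d : R))) * TS.F_mul_N₃ a lam lam y b m
            - TS.F a lam lam y b m * TS.F b' lam lam d y ν * TS.Fbar a lam lam y m b'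
              * TS.Fbar_mul_N₄ b lam lam d y ν
    _ = TS.F lam lam lam φ m ν * TS.Fbar lam lam lam φ ν m
          * ((TS.N lam lam ν : R) * TS.N lam lam ν) * ((TS.N b ν d : R) * TS.N b' ν d)
          * (TS.F a lam ν d b φ * TS.Fbar a lam ν d φ b') := by
        rw [← resolve, Finset.sum_eq_single φ
          (fun k _ hk => by rw [TS.F_eq_zero₂ a d b (hφ k hk)]; ring)
          fun hφm => by
            rw [TS.F_eq_zero₄ lam lam ν (TS.N_eq_zero_of_notMem_channels hφm)]; ring]
        ring
    _ = _ := by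
        rw [TS.F_mul_Fbar_of_unique_channel hφ, TS.N_cast_mul_self]
        split_ifs with hb
        · subst hb
          linear_combination (TS.Fbar lam lam lam φ ν m * (TS.N b ν d : R) * TS.N b ν d
              * TS.N a lam b * TS.N b ν d) * TS.F_mul_N₂ lam lam lam φ m ν
            + (TS.F lam lam lam φ m ν * TS.Fbar lam lam lam φ ν m * TS.N a lam b
              * ((TS.N b ν d : R) + 1)) * TS.N_cast_mul_self b ν d
        · ring

/-- With `D = diag r`, the hexagon reads `D F D = F D' F`; multiplied by `r ν`, the `ν`-th
diagonal entries of `F D F̄` and `F̄ D F` both become `r' ν F_{νν}`, and `r ν` is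
invertible. -/
lemma finsum_F_mul_Fbar_symm {a d ν : I} (r r' : I → R)
    (hex : ∀ e g,
      r e * TS.F a a a d e g * r g = ∑ᶠ f, TS.F a a a d e f * r' f * TS.F a a a d f g)
    {y : R} (hy : r ν * y = TS.N a a ν) :
    ∑ᶠ m, TS.F a a a d ν m * r m * TS.Fbar a a a d m ν
      = ∑ᶠ m, TS.F a a a d m ν * r m * TS.Fbar a a a d ν m := by
  have hex' : ∀ e g, r e * TS.F a a a d e g * r g
      = ∑ f ∈ TS.channels a a, TS.F a a a d e f * r' f * TS.F a a a d f g := fun e g => by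
    rw [hex, TS.finsum_eq_sum_of_N subset_rfl fun f hf => by rw [TS.F_eq_zero₂ a d e hf]; ring]
  have plus : (∑ m ∈ TS.channels a a, TS.F a a a d ν m * r m * TS.Fbar a a a d m ν) * r ν
      = r' ν * TS.F a a a d ν ν := by
    calc _ = ∑ g ∈ TS.channels a a, r ν * TS.F a a a d ν g * r g * TS.Fbar a a a d g ν := by
          rw [Finset.sum_mul]; exact Finset.sum_congr rfl fun _ _ => by ring
      _ = ∑ f ∈ TS.channels a a, TS.F a a a d ν f * r' f
            * ∑ g ∈ TS.channels a a, TS.F a a a d f g * TS.Fbar a a a d g ν := by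
          simp_rw [hex', Finset.sum_mul, Finset.mul_sum]
          rw [Finset.sum_comm]
          exact Finset.sum_congr rfl fun _ _ => Finset.sum_congr rfl fun _ _ => by ring
      _ = _ := by
          simp_rw [TS.sum_F_mul_Fbar subset_rfl, mul_ite, mul_zero, Finset.sum_ite_eq']
          split_ifs with hν
          · linear_combination r' ν * (TS.N ν a d : R) * TS.F_mul_N₁ a a a d ν ν
              + r' ν * TS.F_mul_N₄ a a a d ν ν
          · rw [TS.F_eq_zero₁ a d ν (TS.N_eq_zero_of_notMem_channels hν), mul_zero]
  have minus : (∑ m ∈ TS.channels a a, TS.F a a a d m ν * r m * TS.Fbar a a a d ν m) * r ν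
      = r' ν * TS.F a a a d ν ν := by
    calc _ = ∑ e ∈ TS.channels a a,
          TS.Fbar a a a d ν e * (r e * TS.F a a a d e ν * r ν) := by
          rw [Finset.sum_mul]; exact Finset.sum_congr rfl fun _ _ => by ring
      _ = ∑ f ∈ TS.channels a a,
            (∑ e ∈ TS.channels a a, TS.Fbar a a a d ν e * TS.F a a a d e f)
              * (r' f * TS.F a a a d f ν) := by
          simp_rw [hex', Finset.sum_mul, Finset.mul_sum]
          rw [Finset.sum_comm]
          exact Finset.sum_congr rfl fun _ _ => Finset.sum_congr rfl fun _ _ => by ring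
      _ = _ := by
          simp_rw [TS.sum_Fbar_mul_F subset_rfl, ite_mul, zero_mul, Finset.sum_ite_eq']
          split_ifs with hν
          · linear_combination r' ν * (TS.N a ν d : R) * TS.F_mul_N₁ a a a d ν ν
              + r' ν * TS.F_mul_N₃ a a a d ν ν
          · rw [TS.F_eq_zero₁ a d ν (TS.N_eq_zero_of_notMem_channels hν), mul_zero]
  rw [TS.finsum_eq_sum_of_N subset_rfl fun m hm => by rw [TS.F_eq_zero₂ a d ν hm]; ring,
    TS.finsum_eq_sum_of_N subset_rfl fun m hm => by rw [TS.F_eq_zero₁ a d ν hm]; ring]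
  calc _ = (∑ m ∈ TS.channels a a, TS.F a a a d ν m * r m * TS.Fbar a a a d m ν)
        * TS.N a a ν := by
        rw [Finset.sum_mul]
        exact Finset.sum_congr rfl fun m _ => by
          linear_combination (-(r m * TS.Fbar a a a d m ν)) * TS.F_mul_N₁ a a a d ν m
    _ = (∑ m ∈ TS.channels a a, TS.F a a a d m ν * r m * TS.Fbar a a a d ν m)
        * TS.N a a ν := by
        rw [← hy, ← mul_assoc, ← mul_assoc, plus, minus]
    _ = _ := by
        rw [Finset.sum_mul]
        exact Finset.sum_congr rfl fun m _ => by
          linear_combination (r m * TS.Fbar a a a d ν m) * TS.F_mul_N₂ a a a d m ν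

lemma finsum_sandwich_succ {lam ν φ : I} (hφ : ∀ k, k ≠ φ → TS.N ν lam k = 0)
    (Rf : I → R) {a b b' c c' d : I} (hd : TS.N c lam d = 1) :
    ∑ᶠ x, TS.Fbar a lam lam c' ν b' * TS.F a lam lam c' x ν
        * (∑ᶠ m, Rf m * (TS.Fbar x lam lam d m c' * TS.F x lam lam d c m))
        * (TS.Fbar a lam lam c ν x * TS.F a lam lam c b ν)
      = (∑ᶠ m, TS.F lam lam lam φ ν m * Rf m * TS.Fbar lam lam lam φ m ν)
        * if c = c' then TS.Fbar a lam lam c ν b' * TS.F a lam lam c b ν else 0 := by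
  have inner : ∀ x, ∑ᶠ m, Rf m * (TS.Fbar x lam lam d m c' * TS.F x lam lam d c m)
      = ∑ m ∈ TS.channels lam lam, Rf m * (TS.Fbar x lam lam d m c' * TS.F x lam lam d c m) :=
    fun x => TS.finsum_eq_sum_of_N subset_rfl fun m hm => by rw [TS.F_eq_zero₂ _ _ _ hm]; ring
  simp_rw [inner]
  rw [TS.finsum_eq_sum_of_N (a := a) (b := lam) subset_rfl fun x hx => by
      rw [TS.F_eq_zero₁ _ _ _ hx]; ring,
    TS.finsum_eq_sum_of_N (a := lam) (b := lam) subset_rfl fun m hm => by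
      rw [TS.F_eq_zero₂ _ _ _ hm]; ring]
  calc _ = TS.Fbar a lam lam c' ν b' * TS.F a lam lam c b ν
        * ∑ m ∈ TS.channels lam lam, Rf m * ∑ x ∈ TS.channels a lam,
          TS.F a lam lam c' x ν * TS.Fbar x lam lam d m c' * TS.F x lam lam d c m
            * TS.Fbar a lam lam c ν x := by
        simp_rw [Finset.mul_sum, Finset.sum_mul]
        rw [Finset.sum_comm]
        exact Finset.sum_congr rfl fun _ _ => Finset.sum_congr rfl fun _ _ => by ring
    _ = _ := by
        simp_rw [TS.sandwich_coeff_succ hφ, hd, Finset.sum_mul, Finset.mul_sum]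
        split_ifs with hc
        · subst hc
          refine Finset.sum_congr rfl fun m _ => ?_
          linear_combination (TS.Fbar a lam lam c ν b' * Rf m * TS.F lam lam lam φ ν m
            * TS.Fbar lam lam lam φ m ν) * TS.F_mul_N₃ a lam lam c b ν
        · simp

lemma finsum_sandwich_pred {lam ν φ : I} (hφ : ∀ k, k ≠ φ → TS.N lam ν k = 0)
    (Rf : I → R) {a b b' c c' d : I} (hb : TS.N a lam b = 1) :
    ∑ᶠ x, TS.Fbar b' lam lam d ν c' * TS.F b' lam lam d x ν
        * (∑ᶠ m, Rf m * (TS.Fbar a lam lam x m b' * TS.F a lam lam x b m))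
        * (TS.Fbar b lam lam d ν x * TS.F b lam lam d c ν)
      = (∑ᶠ m, TS.F lam lam lam φ m ν * Rf m * TS.Fbar lam lam lam φ ν m)
        * if b = b' then TS.Fbar b lam lam d ν c' * TS.F b lam lam d c ν else 0 := by
  have inner : ∀ x, ∑ᶠ m, Rf m * (TS.Fbar a lam lam x m b' * TS.F a lam lam x b m)
      = ∑ m ∈ TS.channels lam lam, Rf m * (TS.Fbar a lam lam x m b' * TS.F a lam lam x b m) :=
    fun x => TS.finsum_eq_sum_of_N subset_rfl fun m hm => by rw [TS.F_eq_zero₂ _ _ _ hm]; ring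
  simp_rw [inner]
  rw [TS.finsum_eq_sum_of_N (a := b') (b := lam)
      (Finset.subset_union_right (s₁ := TS.channels b lam)) fun x hx => by
      rw [TS.F_eq_zero₁ _ _ _ hx]; ring,
    TS.finsum_eq_sum_of_N (a := lam) (b := lam) subset_rfl fun m hm => by
      rw [TS.F_eq_zero₁ _ _ _ hm]; ring]
  calc _ = TS.Fbar b' lam lam d ν c' * TS.F b lam lam d c ν
        * ∑ m ∈ TS.channels lam lam, Rf m * ∑ y ∈ TS.channels b lam ∪ TS.channels b' lam,
          TS.F b' lam lam d y ν * TS.Fbar a lam lam y m b' * TS.F a lam lam y b m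
            * TS.Fbar b lam lam d ν y := by
        simp_rw [Finset.mul_sum, Finset.sum_mul]
        rw [Finset.sum_comm]
        exact Finset.sum_congr rfl fun _ _ => Finset.sum_congr rfl fun _ _ => by ring
    _ = _ := by
        simp_rw [TS.sandwich_coeff_pred hφ Finset.subset_union_left Finset.subset_union_right, hb,
          Finset.sum_mul, Finset.mul_sum]
        split_ifs with hbb
        · subst hbb
          refine Finset.sum_congr rfl fun m _ => ?_
          linear_combination (TS.Fbar b lam lam d ν c' * Rf m * TS.F lam lam lam φ m ν
            * TS.Fbar lam lam lam φ ν m) * TS.F_mul_N₃ b lam lam d c ν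
        · simp

section Paths

open Fin.NatCast Function

variable {L : ℕ} {I0 : Set I}

local notation "⟬" n "⟭" => ((n : ℕ) : Fin (L + 1))

lemma natCast_ne_natCast {m n : ℕ} (hm : m ≤ L) (hn : n ≤ L) (h : m ≠ n) : ⟬m⟭ ≠ ⟬n⟭ :=
  fun hmn => h (by
    simpa [Fin.val_cast_of_lt (Nat.lt_succ_of_le hm), Fin.val_cast_of_lt (Nat.lt_succ_of_le hn)]
      using congrArg Fin.val hmn)

section

variable {lam : ℕ → I} {i : ℕ} {ν : I} {μ' μ : Fin (L + 1) → I}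

lemma pMat_eq_zero_of_ne {j : Fin (L + 1)} (hj : j ≠ ⟬i⟭) (h : μ j ≠ μ' j) :
    TS.pMat L lam i ν μ' μ = 0 := by
  rw [pMat, Finset.prod_eq_zero (Finset.mem_erase.2 ⟨hj, Finset.mem_univ j⟩) (if_neg h),
    zero_mul, zero_mul]

lemma pMat_of_forall_ne (h : ∀ j, j ≠ ⟬i⟭ → μ j = μ' j) :
    TS.pMat L lam i ν μ' μ
      = TS.Fbar (μ ⟬i - 1⟭) (lam i) (lam (i + 1)) (μ ⟬i + 1⟭) ν (μ' ⟬i⟭)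
        * TS.F (μ ⟬i - 1⟭) (lam i) (lam (i + 1)) (μ ⟬i + 1⟭) (μ ⟬i⟭) ν := by
  rw [pMat, Finset.prod_eq_one fun j hj => if_pos (h j (Finset.ne_of_mem_erase hj)), one_mul]

lemma pMat_eq_ite {k : Fin (L + 1)} (hk : k ≠ ⟬i⟭) (h : ∀ j, j ≠ ⟬i⟭ → j ≠ k → μ j = μ' j) :
    TS.pMat L lam i ν μ' μ
      = if μ k = μ' k then
          TS.Fbar (μ ⟬i - 1⟭) (lam i) (lam (i + 1)) (μ ⟬i + 1⟭) ν (μ' ⟬i⟭)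
            * TS.F (μ ⟬i - 1⟭) (lam i) (lam (i + 1)) (μ ⟬i + 1⟭) (μ ⟬i⟭) ν
        else 0 := by
  split_ifs with hμk
  · refine TS.pMat_of_forall_ne fun j hj => ?_
    rcases eq_or_ne j k with rfl | hjk
    exacts [hμk, h j hj hjk]
  · exact TS.pMat_eq_zero_of_ne hk hμk

lemma pMat_update_update {j : ℕ} {m x : I} (hij : ⟬j⟭ ≠ ⟬i⟭)
    (h : ∀ k, k ≠ ⟬i⟭ → k ≠ ⟬j⟭ → μ k = μ' k) :
    TS.pMat L lam j m (update μ' ⟬i⟭ x) (update μ ⟬i⟭ x)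
      = TS.Fbar (update μ ⟬i⟭ x ⟬j - 1⟭) (lam j) (lam (j + 1)) (update μ ⟬i⟭ x ⟬j + 1⟭) m
          (μ' ⟬j⟭)
        * TS.F (update μ ⟬i⟭ x ⟬j - 1⟭) (lam j) (lam (j + 1)) (update μ ⟬i⟭ x ⟬j + 1⟭)
          (μ ⟬j⟭) m := by
  rw [TS.pMat_of_forall_ne fun k hk => ?_, update_of_ne hij, update_of_ne hij]
  rcases eq_or_ne k ⟬i⟭ with rfl | hki
  · rw [update_self, update_self]
  · rw [update_of_ne hki, update_of_ne hki]; exact h k hki hk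

lemma finsum_mul_pMat_eq_zero {j : ℕ} {k : Fin (L + 1)} (hk : k ≠ ⟬j⟭) (Rf : I → R)
    {σ τ : Fin (L + 1) → I} (h : σ k ≠ τ k) : ∑ᶠ m, Rf m * TS.pMat L lam j m σ τ = 0 := by
  simp_rw [TS.pMat_eq_zero_of_ne hk (Ne.symm h), mul_zero, finsum_zero]

lemma finsum_mem_isPath_eq_finsum_update {ι : Fin (L + 1)} {G : (Fin (L + 1) → I) → R}
    (hG : ∀ σ, (∃ j, j ≠ ι ∧ σ j ≠ μ j) → G σ = 0)
    (hG0 : ∀ x, ¬ TS.IsPath L I0 lam (update μ ι x) → G (update μ ι x) = 0) :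
    ∑ᶠ σ ∈ {σ | TS.IsPath L I0 lam σ}, G σ = ∑ᶠ x, G (update μ ι x) := by
  rw [← finsum_mem_range (update_injective μ ι)]
  refine finsum_mem_inter_support_eq' _ _ _ fun σ hσ => ⟨fun _ => ⟨σ ι, ?_⟩, ?_⟩
  · refine (eq_update_iff.2 ⟨rfl, fun j hj => ?_⟩).symm
    by_contra h
    exact hσ (hG σ ⟨j, hj, h⟩)
  · rintro ⟨x, rfl⟩
    by_contra h
    exact hσ (hG0 x h)

lemma isPath_update (hμ : TS.IsPath L I0 lam μ) (hi : 1 ≤ i) (hiL : i + 1 ≤ L) {x : I}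
    (h₁ : TS.N (μ ⟬i - 1⟭) (lam i) x = 1) (h₂ : TS.N x (lam (i + 1)) (μ ⟬i + 1⟭) = 1) :
    TS.IsPath L I0 lam (update μ ⟬i⟭ x) := by
  have upd : ∀ n ≤ L, n ≠ i → update μ ⟬i⟭ x ⟬n⟭ = μ ⟬n⟭ := fun n hn hni =>
    update_of_ne (natCast_ne_natCast hn (by omega) hni) _ _
  refine ⟨by simpa using (upd 0 (by omega) (by omega)).symm ▸ hμ.1, fun j hj hjL => ?_⟩
  rcases eq_or_ne j i with rfl | hji
  · rwa [update_self, upd _ (by omega) (by omega)]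
  rcases eq_or_ne j (i + 1) with rfl | hji'
  · rwa [Nat.add_sub_cancel, update_self, upd _ hjL hji]
  rw [upd j hjL hji, upd (j - 1) (by omega) (by omega)]
  exact hμ.2 j hj hjL

lemma N_eq_zero_or_of_not_isPath_update (hμ : TS.IsPath L I0 lam μ) (hi : 1 ≤ i)
    (hiL : i + 1 ≤ L) {x : I} (h : ¬ TS.IsPath L I0 lam (update μ ⟬i⟭ x)) :
    TS.N (μ ⟬i - 1⟭) (lam i) x = 0 ∨ TS.N x (lam (i + 1)) (μ ⟬i + 1⟭) = 0 := by
  by_contra! hN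
  exact h (TS.isPath_update hμ hi hiL (TS.N_eq_one_of_ne_zero hN.1) (TS.N_eq_one_of_ne_zero hN.2))

lemma pMat_mulMat (hi : 1 ≤ i) (hiL : i + 1 ≤ L) (hμ' : TS.IsPath L I0 lam μ')
    (Y : (Fin (L + 1) → I) → (Fin (L + 1) → I) → R) (τ : Fin (L + 1) → I) :
    TS.mulMat L I0 lam (TS.pMat L lam i ν) Y μ' τ
      = ∑ᶠ x, TS.Fbar (μ' ⟬i - 1⟭) (lam i) (lam (i + 1)) (μ' ⟬i + 1⟭) ν (μ' ⟬i⟭)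
          * TS.F (μ' ⟬i - 1⟭) (lam i) (lam (i + 1)) (μ' ⟬i + 1⟭) x ν
          * Y (update μ' ⟬i⟭ x) τ := by
  have hm : ⟬i - 1⟭ ≠ ⟬i⟭ := natCast_ne_natCast (by omega) (by omega) (by omega)
  have hp : ⟬i + 1⟭ ≠ ⟬i⟭ := natCast_ne_natCast hiL (by omega) (by omega)
  have hpμ : ∀ x, TS.pMat L lam i ν μ' (update μ' ⟬i⟭ x)
      = TS.Fbar (μ' ⟬i - 1⟭) (lam i) (lam (i + 1)) (μ' ⟬i + 1⟭) ν (μ' ⟬i⟭)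
        * TS.F (μ' ⟬i - 1⟭) (lam i) (lam (i + 1)) (μ' ⟬i + 1⟭) x ν := fun x => by
    rw [TS.pMat_of_forall_ne fun j hj => update_of_ne hj _ _, update_self, update_of_ne hm,
      update_of_ne hp]
  rw [mulMat, TS.finsum_mem_isPath_eq_finsum_update (μ := μ') (ι := ⟬i⟭)
    (fun σ ⟨j, hj, h⟩ => by rw [TS.pMat_eq_zero_of_ne hj h, zero_mul]) fun x hx => ?_]
  · simp_rw [hpμ]
  · rw [hpμ]
    rcases TS.N_eq_zero_or_of_not_isPath_update hμ' hi hiL hx with h | h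
    · rw [TS.F_eq_zero₁ _ _ _ h]; ring
    · rw [TS.F_eq_zero₄ _ _ _ h]; ring

lemma mulMat_pMat (hi : 1 ≤ i) (hiL : i + 1 ≤ L) (hμ : TS.IsPath L I0 lam μ)
    (Y : (Fin (L + 1) → I) → (Fin (L + 1) → I) → R) (σ : Fin (L + 1) → I) :
    TS.mulMat L I0 lam Y (TS.pMat L lam i ν) σ μ
      = ∑ᶠ x, Y σ (update μ ⟬i⟭ x)
          * (TS.Fbar (μ ⟬i - 1⟭) (lam i) (lam (i + 1)) (μ ⟬i + 1⟭) ν x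
            * TS.F (μ ⟬i - 1⟭) (lam i) (lam (i + 1)) (μ ⟬i + 1⟭) (μ ⟬i⟭) ν) := by
  have hpμ : ∀ x, TS.pMat L lam i ν (update μ ⟬i⟭ x) μ
      = TS.Fbar (μ ⟬i - 1⟭) (lam i) (lam (i + 1)) (μ ⟬i + 1⟭) ν x
        * TS.F (μ ⟬i - 1⟭) (lam i) (lam (i + 1)) (μ ⟬i + 1⟭) (μ ⟬i⟭) ν := fun x => by
    rw [TS.pMat_of_forall_ne fun j hj => (update_of_ne hj _ _).symm, update_self]
  rw [mulMat, TS.finsum_mem_isPath_eq_finsum_update (μ := μ) (ι := ⟬i⟭)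
    (fun τ ⟨j, hj, h⟩ => by rw [TS.pMat_eq_zero_of_ne hj (Ne.symm h), mul_zero])
    fun x hx => ?_]
  · simp_rw [hpμ]
  · rw [hpμ]
    rcases TS.N_eq_zero_or_of_not_isPath_update hμ hi hiL hx with h | h
    · rw [TS.Fbar_eq_zero₁ _ _ _ h]; ring
    · rw [TS.Fbar_eq_zero₄ _ _ _ h]; ring

lemma pMat_mulMat_mulMat_pMat (hi : 1 ≤ i) (hiL : i + 1 ≤ L) (hμ' : TS.IsPath L I0 lam μ')
    (hμ : TS.IsPath L I0 lam μ) {X : (Fin (L + 1) → I) → (Fin (L + 1) → I) → R}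
    (hX : ∀ σ τ, σ ⟬i⟭ ≠ τ ⟬i⟭ → X σ τ = 0) :
    TS.mulMat L I0 lam (TS.pMat L lam i ν) (TS.mulMat L I0 lam X (TS.pMat L lam i ν)) μ' μ
      = ∑ᶠ x, TS.Fbar (μ' ⟬i - 1⟭) (lam i) (lam (i + 1)) (μ' ⟬i + 1⟭) ν (μ' ⟬i⟭)
          * TS.F (μ' ⟬i - 1⟭) (lam i) (lam (i + 1)) (μ' ⟬i + 1⟭) x ν
          * X (update μ' ⟬i⟭ x) (update μ ⟬i⟭ x)
          * (TS.Fbar (μ ⟬i - 1⟭) (lam i) (lam (i + 1)) (μ ⟬i + 1⟭) ν x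
            * TS.F (μ ⟬i - 1⟭) (lam i) (lam (i + 1)) (μ ⟬i + 1⟭) (μ ⟬i⟭) ν) := by
  rw [TS.pMat_mulMat hi hiL hμ']
  refine finsum_congr fun x => ?_
  rw [TS.mulMat_pMat hi hiL hμ, finsum_eq_single _ x fun y hy => by
    rw [hX _ _ (by rw [update_self, update_self]; exact hy.symm), zero_mul]]
  ring

end

lemma pMat_braid_succ_pMat {lam ν φ : I} (hφ : ∀ k, k ≠ φ → TS.N ν lam k = 0)
    (Rf : I → R) {i : ℕ} (hi : 1 ≤ i) (hiL : i + 2 ≤ L) :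
    TS.MatEqOn L I0 (fun _ => lam)
      (TS.mulMat L I0 (fun _ => lam) (TS.pMat L (fun _ => lam) i ν)
        (TS.mulMat L I0 (fun _ => lam)
          (fun σ τ => ∑ᶠ m, Rf m * TS.pMat L (fun _ => lam) (i + 1) m σ τ)
          (TS.pMat L (fun _ => lam) i ν)))
      (smulMat (∑ᶠ m, TS.F lam lam lam φ ν m * Rf m * TS.Fbar lam lam lam φ m ν)
        (TS.pMat L (fun _ => lam) i ν)) := by
  intro μ' μ hμ' hμ
  have hp : ⟬i + 1⟭ ≠ ⟬i⟭ := natCast_ne_natCast (by omega) (by omega) (by omega)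
  rw [TS.pMat_mulMat_mulMat_pMat hi (by omega) hμ' hμ fun σ τ h =>
    TS.finsum_mul_pMat_eq_zero hp.symm Rf h, smulMat]
  by_cases hspec : ∃ j, j ≠ ⟬i⟭ ∧ j ≠ ⟬i + 1⟭ ∧ μ j ≠ μ' j
  · obtain ⟨j, hji, hji', hj⟩ := hspec
    rw [TS.pMat_eq_zero_of_ne hji hj, mul_zero]
    refine finsum_eq_zero_of_forall_eq_zero fun x => ?_
    rw [TS.finsum_mul_pMat_eq_zero hji' Rf
      (by rwa [update_of_ne hji, update_of_ne hji, ne_comm]), mul_zero, zero_mul]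
  push Not at hspec
  have hm : ⟬i - 1⟭ ≠ ⟬i⟭ := natCast_ne_natCast (by omega) (by omega) (by omega)
  have hm' : ⟬i - 1⟭ ≠ ⟬i + 1⟭ := natCast_ne_natCast (by omega) (by omega) (by omega)
  have hpp : ⟬i + 1 + 1⟭ ≠ ⟬i⟭ := natCast_ne_natCast (by omega) (by omega) (by omega)
  have hpp' : ⟬i + 1 + 1⟭ ≠ ⟬i + 1⟭ := natCast_ne_natCast (by omega) (by omega) (by omega)
  have hd := hμ.2 (i + 1 + 1) (by omega) (by omega)
  rw [Nat.add_sub_cancel, hspec _ hpp hpp'] at hd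
  simp_rw [TS.pMat_update_update hp hspec, Nat.add_sub_cancel, update_self, update_of_ne hpp,
    TS.pMat_eq_ite hp fun j hj hj' => hspec j hj hj', hspec _ hm hm', hspec _ hpp hpp']
  exact TS.finsum_sandwich_succ hφ Rf hd

lemma pMat_braid_pred_pMat {lam ν φ : I} (hφ : ∀ k, k ≠ φ → TS.N lam ν k = 0)
    (Rf : I → R) {i : ℕ} (hi : 2 ≤ i) (hiL : i + 1 ≤ L) :
    TS.MatEqOn L I0 (fun _ => lam)
      (TS.mulMat L I0 (fun _ => lam) (TS.pMat L (fun _ => lam) i ν)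
        (TS.mulMat L I0 (fun _ => lam)
          (fun σ τ => ∑ᶠ m, Rf m * TS.pMat L (fun _ => lam) (i - 1) m σ τ)
          (TS.pMat L (fun _ => lam) i ν)))
      (smulMat (∑ᶠ m, TS.F lam lam lam φ m ν * Rf m * TS.Fbar lam lam lam φ ν m)
        (TS.pMat L (fun _ => lam) i ν)) := by
  intro μ' μ hμ' hμ
  have hm : ⟬i - 1⟭ ≠ ⟬i⟭ := natCast_ne_natCast (by omega) (by omega) (by omega)
  rw [TS.pMat_mulMat_mulMat_pMat (by omega) hiL hμ' hμ fun σ τ h =>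
    TS.finsum_mul_pMat_eq_zero hm.symm Rf h, smulMat]
  by_cases hspec : ∃ j, j ≠ ⟬i⟭ ∧ j ≠ ⟬i - 1⟭ ∧ μ j ≠ μ' j
  · obtain ⟨j, hji, hji', hj⟩ := hspec
    rw [TS.pMat_eq_zero_of_ne hji hj, mul_zero]
    refine finsum_eq_zero_of_forall_eq_zero fun x => ?_
    rw [TS.finsum_mul_pMat_eq_zero hji' Rf
      (by rwa [update_of_ne hji, update_of_ne hji, ne_comm]), mul_zero, zero_mul]
  push Not at hspec
  have hmm : ⟬i - 1 - 1⟭ ≠ ⟬i⟭ := natCast_ne_natCast (by omega) (by omega) (by omega)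
  have hmm' : ⟬i - 1 - 1⟭ ≠ ⟬i - 1⟭ := natCast_ne_natCast (by omega) (by omega) (by omega)
  have hp : ⟬i + 1⟭ ≠ ⟬i⟭ := natCast_ne_natCast (by omega) (by omega) (by omega)
  have hp' : ⟬i + 1⟭ ≠ ⟬i - 1⟭ := natCast_ne_natCast (by omega) (by omega) (by omega)
  have hb := hμ.2 (i - 1) (by omega) (by omega)
  rw [hspec _ hmm hmm'] at hb
  simp_rw [TS.pMat_update_update hm hspec, Nat.sub_add_cancel (show 1 ≤ i by omega), update_self,
    update_of_ne hmm, TS.pMat_eq_ite hm fun j hj hj' => hspec j hj hj', hspec _ hmm hmm',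
    hspec _ hp hp']
  exact TS.finsum_sandwich_pred hφ Rf hb

end Paths

end TensorSystem

theorem projection_braiding_projection_general
    {R : Type*} [CommRing R] {I : Type*}
    (BTS : BraidedTensorSystem R I) (lam0 ν : I)
    (hone : BTS.toTensorSystem.ActsOneDimLeft ν lam0)
    (φ : I) (hφ : BTS.N ν lam0 φ = 1)
    (L : ℕ) (I0 : Set I) :
    (∀ i : ℕ, 1 ≤ i → i + 2 ≤ L →
      BTS.toTensorSystem.MatEqOn L I0 (fun _ => lam0)
      (BTS.toTensorSystem.mulMat L I0 (fun _ => lam0)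
      (BTS.toTensorSystem.pMat L (fun _ => lam0) (i) ν)
      (BTS.toTensorSystem.mulMat L I0 (fun _ => lam0)
      (BTS.Rmat L lam0 (i + 1))
      (BTS.toTensorSystem.pMat L (fun _ => lam0) (i) ν)))
      (smulMat (∑ᶠ υ : I, BTS.F lam0 lam0 lam0 φ υ ν * BTS.Rm lam0 lam0 υ * BTS.Fbar lam0 lam0 lam0 φ ν υ) (BTS.toTensorSystem.pMat L (fun _ => lam0) (i) ν)))
    ∧ (∀ i : ℕ, 1 ≤ i → i + 2 ≤ L →
      BTS.toTensorSystem.MatEqOn L I0 (fun _ => lam0)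
      (BTS.toTensorSystem.mulMat L I0 (fun _ => lam0)
      (BTS.toTensorSystem.pMat L (fun _ => lam0) (i) ν)
      (BTS.toTensorSystem.mulMat L I0 (fun _ => lam0)
      (BTS.RbarMat L lam0 (i + 1))
      (BTS.toTensorSystem.pMat L (fun _ => lam0) (i) ν)))
      (smulMat (∑ᶠ υ : I, BTS.F lam0 lam0 lam0 φ υ ν * BTS.Rbarm lam0 lam0 υ * BTS.Fbar lam0 lam0 lam0 φ ν υ) (BTS.toTensorSystem.pMat L (fun _ => lam0) (i) ν)))
    ∧ (∀ i : ℕ, 2 ≤ i → i + 1 ≤ L →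
      BTS.toTensorSystem.MatEqOn L I0 (fun _ => lam0)
      (BTS.toTensorSystem.mulMat L I0 (fun _ => lam0)
      (BTS.toTensorSystem.pMat L (fun _ => lam0) (i) ν)
      (BTS.toTensorSystem.mulMat L I0 (fun _ => lam0)
      (BTS.Rmat L lam0 (i - 1))
      (BTS.toTensorSystem.pMat L (fun _ => lam0) (i) ν)))
      (smulMat (∑ᶠ υ : I, BTS.F lam0 lam0 lam0 φ υ ν * BTS.Rm lam0 lam0 υ * BTS.Fbar lam0 lam0 lam0 φ ν υ) (BTS.toTensorSystem.pMat L (fun _ => lam0) (i) ν)))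
    ∧ (∀ i : ℕ, 2 ≤ i → i + 1 ≤ L →
      BTS.toTensorSystem.MatEqOn L I0 (fun _ => lam0)
      (BTS.toTensorSystem.mulMat L I0 (fun _ => lam0)
      (BTS.toTensorSystem.pMat L (fun _ => lam0) (i) ν)
      (BTS.toTensorSystem.mulMat L I0 (fun _ => lam0)
      (BTS.RbarMat L lam0 (i - 1))
      (BTS.toTensorSystem.pMat L (fun _ => lam0) (i) ν)))
      (smulMat (∑ᶠ υ : I, BTS.F lam0 lam0 lam0 φ υ ν * BTS.Rbarm lam0 lam0 υ * BTS.Fbar lam0 lam0 lam0 φ ν υ) (BTS.toTensorSystem.pMat L (fun _ => lam0) (i) ν))) := by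
  have hφl : ∀ k, k ≠ φ → BTS.N ν lam0 k = 0 := fun k hk =>
    BTS.N_eq_zero_of_actsOneDimLeft hone hφ hk
  have hφr : ∀ k, k ≠ φ → BTS.N lam0 ν k = 0 := fun k hk => (BTS.N_symm lam0 ν k).trans (hφl k hk)
  have symmR := BTS.finsum_F_mul_Fbar_symm (BTS.Rm lam0 lam0) (fun f => BTS.Rm f lam0 φ)
    (BTS.hexagonR lam0 lam0 lam0 φ) (BTS.Rm_Rbarm lam0 lam0 ν)
  have symmRbar := BTS.finsum_F_mul_Fbar_symm (BTS.Rbarm lam0 lam0) (fun f => BTS.Rbarm f lam0 φ)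
    (BTS.hexagonRbar lam0 lam0 lam0 φ) ((mul_comm _ _).trans (BTS.Rm_Rbarm lam0 lam0 ν))
  refine ⟨fun i hi hiL => ?_, fun i hi hiL => ?_, fun i hi hiL => ?_, fun i hi hiL => ?_⟩
  · rw [← symmR]; exact BTS.pMat_braid_succ_pMat hφl _ hi hiL
  · rw [← symmRbar]; exact BTS.pMat_braid_succ_pMat hφl _ hi hiL
  · exact BTS.pMat_braid_pred_pMat hφr _ hi hiL
  · exact BTS.pMat_braid_pred_pMat hφr _ hi hiL

/-- `p_i^{(ν)} R_{i±1} p_i^{(ν)}` and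
`p_i^{(ν)} R_{i±1}⁻¹ p_i^{(ν)}` as multiples of `p_i^{(ν)}`. -/
theorem projection_braiding_projection
    {R : Type*} [CommRing R] {I : Type*}
    (BTS : BraidedTensorSystem R I) (lam0 ν : I)
    (hone : BTS.toTensorSystem.ActsOneDimLeft ν lam0)
    (φ : I) (hφ : BTS.N ν lam0 φ = 1)
    (L : ℕ) (I0 : Set I) (hI0 : I0.Finite) :
    (∀ i : ℕ, 1 ≤ i → i + 2 ≤ L →
      BTS.toTensorSystem.MatEqOn L I0 (fun _ => lam0)
      (BTS.toTensorSystem.mulMat L I0 (fun _ => lam0)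
      (BTS.toTensorSystem.pMat L (fun _ => lam0) (i) ν)
      (BTS.toTensorSystem.mulMat L I0 (fun _ => lam0)
      (BTS.Rmat L lam0 (i + 1))
      (BTS.toTensorSystem.pMat L (fun _ => lam0) (i) ν)))
      (smulMat (∑ᶠ υ : I, BTS.F lam0 lam0 lam0 φ υ ν * BTS.Rm lam0 lam0 υ * BTS.Fbar lam0 lam0 lam0 φ ν υ) (BTS.toTensorSystem.pMat L (fun _ => lam0) (i) ν)))
    ∧ (∀ i : ℕ, 1 ≤ i → i + 2 ≤ L →
      BTS.toTensorSystem.MatEqOn L I0 (fun _ => lam0)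
      (BTS.toTensorSystem.mulMat L I0 (fun _ => lam0)
      (BTS.toTensorSystem.pMat L (fun _ => lam0) (i) ν)
      (BTS.toTensorSystem.mulMat L I0 (fun _ => lam0)
      (BTS.RbarMat L lam0 (i + 1))
      (BTS.toTensorSystem.pMat L (fun _ => lam0) (i) ν)))
      (smulMat (∑ᶠ υ : I, BTS.F lam0 lam0 lam0 φ υ ν * BTS.Rbarm lam0 lam0 υ * BTS.Fbar lam0 lam0 lam0 φ ν υ) (BTS.toTensorSystem.pMat L (fun _ => lam0) (i) ν)))
    ∧ (∀ i : ℕ, 2 ≤ i → i + 1 ≤ L →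
      BTS.toTensorSystem.MatEqOn L I0 (fun _ => lam0)
      (BTS.toTensorSystem.mulMat L I0 (fun _ => lam0)
      (BTS.toTensorSystem.pMat L (fun _ => lam0) (i) ν)
      (BTS.toTensorSystem.mulMat L I0 (fun _ => lam0)
      (BTS.Rmat L lam0 (i - 1))
      (BTS.toTensorSystem.pMat L (fun _ => lam0) (i) ν)))
      (smulMat (∑ᶠ υ : I, BTS.F lam0 lam0 lam0 φ υ ν * BTS.Rm lam0 lam0 υ * BTS.Fbar lam0 lam0 lam0 φ ν υ) (BTS.toTensorSystem.pMat L (fun _ => lam0) (i) ν)))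
    ∧ (∀ i : ℕ, 2 ≤ i → i + 1 ≤ L →
      BTS.toTensorSystem.MatEqOn L I0 (fun _ => lam0)
      (BTS.toTensorSystem.mulMat L I0 (fun _ => lam0)
      (BTS.toTensorSystem.pMat L (fun _ => lam0) (i) ν)
      (BTS.toTensorSystem.mulMat L I0 (fun _ => lam0)
      (BTS.RbarMat L lam0 (i - 1))
      (BTS.toTensorSystem.pMat L (fun _ => lam0) (i) ν)))
      (smulMat (∑ᶠ υ : I, BTS.F lam0 lam0 lam0 φ υ ν * BTS.Rbarm lam0 lam0 υ * BTS.Fbar lam0 lam0 lam0 φ ν υ) (BTS.toTensorSystem.pMat L (fun _ => lam0) (i) ν))) :=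
  projection_braiding_projection_general BTS lam0 ν hone φ hφ L I0
end
end

section
/- In a braided multiplicity-free semi-simple tensor system over a commutative ring R, let λ, ν ∈ I be such that ν acts one-dimensionally on λ, and suppose d, g ∈ R are units with d^{-1} = Σ_{υ∈I} (F^{λλλ}_{φ_ν(λ)})^υ_ν R^{λλ}_υ (F̄^{λλλ}_{φ_ν(λ)})^ν_υ and g^{-2} = R^{λλ}_ν. Define U_i = d p_i^{(ν)} and G_i = g R_i on H_{λ̃} with λ̃ = (λ,…,λ). If m ∈ R satisfies g R^{λλ}_υ − g^{-1} R̄^{λλ}_υ = m for every υ ∈ I with N_{λλ}^υ = 1 and υ ≠ ν, and g^{-1} − g = m(1 − d), then the remaining Birman–Murakami–Wenzl relation holds: G_i − G_i^{-1} = m(Id − U_i) for all 1 ≤ i ≤ L−1, where G_i^{-1} = g^{-1} Σ_{μ∈I} R̄^{λλ}_μ p_i^{(μ)}. -/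
open scoped Classical

open Fin.NatCast

noncomputable section

/-!
On fusion paths the projections form a resolution of the identity, `Σ_υ p_i^{(υ)} = Id`
(this is `F · F̄ = id`), and `G_i − G_i⁻¹ = Σ_υ (g R^{λλ}_υ − g⁻¹ R̄^{λλ}_υ) p_i^{(υ)}`.
Every coefficient with `υ ≠ ν` equals `m`, while `g² R^{λλ}_ν = 1` and `R R̄ = N` turn the
`ν`-coefficient into `g⁻¹ − g = m (1 − d)`; hence the sum is `m (Id − d p_i^{(ν)})`.
-/

theorem finsum_mul_eq_of_forall_ne {R : Type*} [Ring R] {I : Type*} {p c : I → R}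
    (hp : (Function.support p).Finite) (m : R) (ν : I)
    (hc : ∀ x ≠ ν, c x * p x = m * p x) :
    ∑ᶠ x, c x * p x = m * ∑ᶠ x, p x + (c ν - m) * p ν := by
  have hfin : ∀ c : I → R, (Function.support fun x => c x * p x).Finite :=
    fun c => hp.subset (Function.support_mul_subset_right _ _)
  rw [mul_finsum' _ _ hp, ← sub_eq_iff_eq_add', ← finsum_sub_distrib (hfin c) (hfin _)]
  simp_rw [← sub_mul]
  exact finsum_eq_single _ ν fun x hx => by rw [sub_mul, hc x hx, sub_self]

namespace TensorSystem

variable {R : Type*} [CommRing R] {I : Type*}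

theorem F_eq_zero_of_N_eq_zero (TS : TensorSystem R I) {a b c d e f : I} (h : TS.N b c f = 0) :
    TS.F a b c d e f = 0 :=
  TS.F_vanish _ _ _ _ _ _ (by simp [h])

theorem Fbar_eq_zero_of_N_eq_zero (TS : TensorSystem R I) {a b c d e f : I}
    (h : TS.N b c f = 0) : TS.Fbar a b c d f e = 0 :=
  TS.Fbar_vanish _ _ _ _ _ _ (by simp [h])

theorem pMat_eq_zero_of_N_eq_zero (TS : TensorSystem R I) {L : ℕ} {lam : ℕ → I} {i : ℕ}
    {ν : I} (hν : TS.N (lam i) (lam (i + 1)) ν = 0) (μ' μ : Fin (L + 1) → I) :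
    TS.pMat L lam i ν μ' μ = 0 := by
  rw [pMat, TS.Fbar_eq_zero_of_N_eq_zero hν, mul_zero, zero_mul]

theorem support_pMat_finite (TS : TensorSystem R I) (L : ℕ) (lam : ℕ → I) (i : ℕ)
    (μ' μ : Fin (L + 1) → I) :
    (Function.support fun ν => TS.pMat L lam i ν μ' μ).Finite :=
  (TS.N_finite (lam i) (lam (i + 1))).subset fun _ hν =>
    mt (TS.pMat_eq_zero_of_N_eq_zero · μ' μ) hν

theorem finsum_pMat_eq_deltaMat (TS : TensorSystem R I) {L : ℕ} {lam : ℕ → I} {i : ℕ}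
    {μ' μ : Fin (L + 1) → I}
    (hi : TS.N (μ ((i - 1 : ℕ) : Fin (L + 1))) (lam i) (μ ((i : ℕ) : Fin (L + 1))) = 1)
    (hi' : TS.N (μ ((i : ℕ) : Fin (L + 1))) (lam (i + 1)) (μ ((i + 1 : ℕ) : Fin (L + 1))) = 1) :
    ∑ᶠ ν, TS.pMat L lam i ν μ' μ = deltaMat L μ' μ := by
  have hF : (Function.support fun ν =>
      TS.F (μ ((i - 1 : ℕ) : Fin (L + 1))) (lam i) (lam (i + 1)) (μ ((i + 1 : ℕ) : Fin (L + 1)))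
          (μ ((i : ℕ) : Fin (L + 1))) ν
        * TS.Fbar (μ ((i - 1 : ℕ) : Fin (L + 1))) (lam i) (lam (i + 1))
          (μ ((i + 1 : ℕ) : Fin (L + 1))) ν (μ' ((i : ℕ) : Fin (L + 1)))).Finite :=
    (TS.N_finite (lam i) (lam (i + 1))).subset fun ν hν h =>
      hν (by simp only [TS.F_eq_zero_of_N_eq_zero h, zero_mul])
  simp_rw [pMat, mul_assoc, mul_comm (TS.Fbar _ _ _ _ _ _)]
  rw [← mul_finsum' _ _ hF, TS.F_Fbar, hi, hi', deltaMat,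
    ← Finset.mul_prod_erase Finset.univ _ (Finset.mem_univ ((i : ℕ) : Fin (L + 1)))]
  push_cast
  ring

end TensorSystem

namespace BraidedTensorSystem

variable {R : Type*} [CommRing R] {I : Type*}

theorem mul_Rmat_sub_mul_RbarMat (BTS : BraidedTensorSystem R I) (L : ℕ) (lam0 : I) (i : ℕ)
    (a b : R) (μ' μ : Fin (L + 1) → I) :
    a * BTS.Rmat L lam0 i μ' μ - b * BTS.RbarMat L lam0 i μ' μ
      = ∑ᶠ x, (a * BTS.Rm lam0 lam0 x - b * BTS.Rbarm lam0 lam0 x)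
          * BTS.pMat L (fun _ => lam0) i x μ' μ := by
  have hfin : ∀ c : I → R,
      (Function.support fun x => c x * BTS.pMat L (fun _ => lam0) i x μ' μ).Finite :=
    fun c => (BTS.support_pMat_finite L _ i μ' μ).subset (Function.support_mul_subset_right _ _)
  rw [Rmat, RbarMat, mul_finsum' _ _ (hfin _), mul_finsum' _ _ (hfin _)]
  simp_rw [← mul_assoc]
  rw [← finsum_sub_distrib (hfin _) (hfin _)]
  simp_rw [sub_mul]

theorem mul_Rm_sub_mul_Rbarm_mul_of_inv_sq_eq (BTS : BraidedTensorSystem R I) {a b ν : I}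
    {g : Rˣ} (hg : ((g⁻¹ : Rˣ) : R) ^ 2 = BTS.Rm a b ν) {r : R} (hr : BTS.N a b ν = 0 → r = 0) :
    ((g : R) * BTS.Rm a b ν - ((g⁻¹ : Rˣ) : R) * BTS.Rbarm b a ν) * r
      = (((g⁻¹ : Rˣ) : R) - g) * r := by
  have hRm : (g : R) * BTS.Rm a b ν = ((g⁻¹ : Rˣ) : R) := by
    rw [← hg, sq, ← mul_assoc, Units.mul_inv, one_mul]
  have hRbarm : ((g⁻¹ : Rˣ) : R) * BTS.Rbarm b a ν = g * BTS.N a b ν := by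
    rw [← BTS.Rm_Rbarm, ← hg]
    linear_combination (-((g⁻¹ : Rˣ) : R) * BTS.Rbarm b a ν) * Units.mul_inv g
  rw [hRm, hRbarm]
  rcases Nat.le_one_iff_eq_zero_or_eq_one.mp (BTS.N_le_one a b ν) with h | h
  · simp [hr h]
  · simp [h]

end BraidedTensorSystem

theorem bmw_skein_relation_general
    {R : Type*} [CommRing R] {I : Type*}
    (BTS : BraidedTensorSystem R I) (lam0 ν : I)
    (d g : Rˣ)
    (hg : ((g⁻¹ : Rˣ) : R) ^ 2 = BTS.Rm lam0 lam0 ν)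
    (m : R)
    (hm1 : ∀ υ : I, BTS.N lam0 lam0 υ = 1 → υ ≠ ν →
      (g : R) * BTS.Rm lam0 lam0 υ - ((g⁻¹ : Rˣ) : R) * BTS.Rbarm lam0 lam0 υ = m)
    (hm2 : ((g⁻¹ : Rˣ) : R) - (g : R) = m * (1 - (d : R)))
    (L : ℕ) (I0 : Set I) :
    ∀ i : ℕ, 1 ≤ i → i + 1 ≤ L →
      BTS.toTensorSystem.MatEqOn L I0 (fun _ => lam0)
        (fun μ' μ => (g : R) * BTS.Rmat L lam0 i μ' μ
          - ((g⁻¹ : Rˣ) : R) * BTS.RbarMat L lam0 i μ' μ)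
        (fun μ' μ => m * (deltaMat L μ' μ
          - (d : R) * BTS.toTensorSystem.pMat L (fun _ => lam0) i ν μ' μ)) := by
  intro i hi hiL μ' μ _ hμ
  have hsum := BTS.finsum_pMat_eq_deltaMat (lam := fun _ => lam0) (μ' := μ')
    (hμ.2 i hi (by omega))
    (by simpa only [Nat.add_sub_cancel] using hμ.2 (i + 1) (by omega) hiL)
  have hoff : ∀ x ≠ ν, ((g : R) * BTS.Rm lam0 lam0 x - ((g⁻¹ : Rˣ) : R) * BTS.Rbarm lam0 lam0 x)
      * BTS.pMat L (fun _ => lam0) i x μ' μ = m * BTS.pMat L (fun _ => lam0) i x μ' μ := by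
    intro x hx
    rcases Nat.le_one_iff_eq_zero_or_eq_one.mp (BTS.N_le_one lam0 lam0 x) with h | h
    · simp [BTS.pMat_eq_zero_of_N_eq_zero (lam := fun _ => lam0) (i := i) h]
    · rw [hm1 x h hx]
  beta_reduce
  rw [BTS.mul_Rmat_sub_mul_RbarMat, finsum_mul_eq_of_forall_ne
    (BTS.support_pMat_finite L _ i μ' μ) m ν hoff, hsum, sub_mul,
    BTS.mul_Rm_sub_mul_Rbarm_mul_of_inv_sq_eq hg (BTS.pMat_eq_zero_of_N_eq_zero · μ' μ), hm2]
  ring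

/-- the remaining Birman–Murakami–Wenzl skein relation
`G_i − G_i⁻¹ = m (Id − U_i)` under the eigenvalue conditions on `m`. -/
theorem bmw_skein_relation
    {R : Type*} [CommRing R] {I : Type*}
    (BTS : BraidedTensorSystem R I) (lam0 ν : I)
    (hone : BTS.toTensorSystem.ActsOneDimLeft ν lam0)
    (φ : I) (hφ : BTS.N ν lam0 φ = 1)
    (d g : Rˣ)
    (hd : ((d⁻¹ : Rˣ) : R)
      = ∑ᶠ υ : I, BTS.F lam0 lam0 lam0 φ υ ν * BTS.Rm lam0 lam0 υ
          * BTS.Fbar lam0 lam0 lam0 φ ν υ)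
    (hg : ((g⁻¹ : Rˣ) : R) ^ 2 = BTS.Rm lam0 lam0 ν)
    (m : R)
    (hm1 : ∀ υ : I, BTS.N lam0 lam0 υ = 1 → υ ≠ ν →
      (g : R) * BTS.Rm lam0 lam0 υ - ((g⁻¹ : Rˣ) : R) * BTS.Rbarm lam0 lam0 υ = m)
    (hm2 : ((g⁻¹ : Rˣ) : R) - (g : R) = m * (1 - (d : R)))
    (L : ℕ) (I0 : Set I) (hI0 : I0.Finite) :
    ∀ i : ℕ, 1 ≤ i → i + 1 ≤ L →
      BTS.toTensorSystem.MatEqOn L I0 (fun _ => lam0)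
        (fun μ' μ => (g : R) * BTS.Rmat L lam0 i μ' μ
          - ((g⁻¹ : Rˣ) : R) * BTS.RbarMat L lam0 i μ' μ)
        (fun μ' μ => m * (deltaMat L μ' μ
          - (d : R) * BTS.toTensorSystem.pMat L (fun _ => lam0) i ν μ' μ)) :=
  bmw_skein_relation_general BTS lam0 ν d g hg m hm1 hm2 L I0
end
end

section
/- Let M be a module over a commutative ring R, and let p_1, …, p_{L−1} be R-linear idempotent endomorphisms of M such that p_i p_j = p_j p_i whenever i + 2 ≤ j. Suppose c_1, …, c_{L−2} ∈ R satisfy p_i p_{i+1} p_i = c_i p_i and p_{i+1} p_i p_{i+1} = c_i p_{i+1} for all 1 ≤ i ≤ L−2. Then for every 1 ≤ i ≤ L−3 one has (c_{i+1} − c_i) p_i p_{i+2} = 0; in particular, if R is a field and p_i p_{i+2} ≠ 0 then c_{i+1} = c_i. -/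
/-- homogeneity of the Temperley–Lieb constants. If idempotents
`p_1, …, p_{L-1}` commute at distance two and satisfy `p_i p_{i+1} p_i = c_i p_i`
and `p_{i+1} p_i p_{i+1} = c_i p_{i+1}`, then `(c_{i+1} - c_i) • (p_i p_{i+2}) = 0`;
in particular over a field, `p_i p_{i+2} ≠ 0` forces `c_{i+1} = c_i`. -/
theorem TL_constants_homogeneous
    {R : Type*} [CommRing R] {M : Type*} [AddCommGroup M] [Module R M]
    (L : ℕ) (p : ℕ → Module.End R M)
    (hid : ∀ i, 1 ≤ i → i + 1 ≤ L → p i * p i = p i)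
    (hcomm : ∀ i j, 1 ≤ i → i + 2 ≤ j → j + 1 ≤ L → p i * p j = p j * p i)
    (c : ℕ → R)
    (h1 : ∀ i, 1 ≤ i → i + 2 ≤ L → p i * p (i + 1) * p i = c i • p i)
    (h2 : ∀ i, 1 ≤ i → i + 2 ≤ L → p (i + 1) * p i * p (i + 1) = c i • p (i + 1)) :
    (∀ i, 1 ≤ i → i + 3 ≤ L → (c (i + 1) - c i) • (p i * p (i + 2)) = 0)
    ∧ (IsField R → ∀ i, 1 ≤ i → i + 3 ≤ L → p i * p (i + 2) ≠ 0 → c (i + 1) = c i) := by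
  have key : ∀ i, 1 ≤ i → i + 3 ≤ L → (c (i + 1) - c i) • (p i * p (i + 2)) = 0 := by
    intro i hi hL
    have hii : p i * p i = p i := hid i hi (by omega)
    have hii2 : p (i + 2) * p (i + 2) = p (i + 2) := hid (i + 2) (by omega) (by omega)
    have hc : p i * p (i + 2) = p (i + 2) * p i := hcomm i (i + 2) hi (by omega) (by omega)
    have hA : p (i + 1 + 1) = p (i + 2) := by norm_num
    have e2' := h2 (i + 1) (by omega) (by omega)
    rw [hA] at e2'
    have e1' := h1 i hi (by omega)
    -- two ways to compute X := p i * (p (i+2) * p (i+1) * p (i+2)) * p i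
    have eA : p i * (p (i + 2) * p (i + 1) * p (i + 2)) * p i
        = c (i + 1) • (p i * p (i + 2)) := by
      rw [e2', mul_smul_comm, smul_mul_assoc, hc, mul_assoc, hii]
    have eB : p i * (p (i + 2) * p (i + 1) * p (i + 2)) * p i
        = c i • (p i * p (i + 2)) := by
      have : p i * (p (i + 2) * p (i + 1) * p (i + 2)) * p i
          = p (i + 2) * (p i * p (i + 1) * p i) * p (i + 2) := by
        rw [show p i * (p (i + 2) * p (i + 1) * p (i + 2)) * p i
            = (p i * p (i + 2)) * p (i + 1) * (p (i + 2) * p i) by noncomm_ring,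
          hc, ← hc]
        rw [mul_assoc, mul_assoc, mul_assoc, mul_assoc, ← mul_assoc (p i), ← mul_assoc (p (i+2)), hc]; noncomm_ring
      rw [this, e1', mul_smul_comm, smul_mul_assoc, mul_assoc, hc, ← mul_assoc, hii2, ← hc]
    rw [sub_smul, ← eA, ← eB, sub_self]
  refine ⟨key, fun hF i hi hL hne => ?_⟩
  by_contra hcc
  have hd : c (i + 1) - c i ≠ 0 := sub_ne_zero.mpr hcc
  obtain ⟨b, hb⟩ := hF.mul_inv_cancel hd
  apply hne
  calc p i * p (i + 2) = ((c (i + 1) - c i) * b) • (p i * p (i + 2)) := by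
        rw [hb, one_smul]
      _ = (b * (c (i + 1) - c i)) • (p i * p (i + 2)) := by rw [mul_comm]
      _ = b • ((c (i + 1) - c i) • (p i * p (i + 2))) := by rw [mul_smul]
      _ = 0 := by rw [key i hi hL, smul_zero]
end
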